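/- Let A be an anti-flexible algebra and E an anti-flexible algebra containing A as a subalgebra (the product in E of two elements of A lies in A and agrees with the product of A). Let p: E→A be any linear projection with p(a) = a for all a in A and set V = ker(p). Then there exists a type (a2) extending datum (⇀, ↼, ◁, ▷, σ, ·_V) of A through V, i.e. linear maps making the unified product A_σ # V an anti-flexible algebra, such that the map (a,x) ↦ a + x is an isomorphism of anti-flexible algebras from A_σ # V onto E. -/
import Mathlib


open TensorProduct LinearMap

namespace AntiFlexible

section Basic

variable (K : Type*) [Field K] [CharZero K]
variable (M N P : Type*)
variable [AddCommGroup M] [Module K M] [AddCommGroup N] [Module K N] [AddCommGroup P] [Module K P]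

/-- The flip map `τ : M ⊗ N → N ⊗ M`. -/
noncomputable def τ : M ⊗[K] N →ₗ[K] N ⊗[K] M := (TensorProduct.comm K M N).toLinearMap

/-- `τ₁₃ : (M ⊗ N) ⊗ P → (P ⊗ N) ⊗ M`, exchanging the outer tensor factors. -/
noncomputable def τ₁₃ : (M ⊗[K] N) ⊗[K] P →ₗ[K] (P ⊗[K] N) ⊗[K] M :=
  (TensorProduct.assoc K P N M).symm.toLinearMap ∘ₗ
    (lTensor P (τ K M N)) ∘ₗ (TensorProduct.comm K (M ⊗[K] N) P).toLinearMap

/-- The reassociator `M ⊗ (N ⊗ P) → (M ⊗ N) ⊗ P`. -/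
noncomputable def α : M ⊗[K] (N ⊗[K] P) →ₗ[K] (M ⊗[K] N) ⊗[K] P :=
  (TensorProduct.assoc K M N P).symm.toLinearMap

/-- The antisymmetrizer `id - τ` on `M ⊗ M`. -/
noncomputable def ω : M ⊗[K] M →ₗ[K] M ⊗[K] M := LinearMap.id - τ K M M

end Basic

section Structures

variable {K : Type*} [Field K] [CharZero K]
variable {A H V : Type*}
variable [AddCommGroup A] [Module K A] [AddCommGroup H] [Module K H]
variable [AddCommGroup V] [Module K V]

/-- Anti-flexible algebra: `(ab)c - a(bc) = (cb)a - c(ba)`. -/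
def IsAFAlgebra (m : A →ₗ[K] A →ₗ[K] A) : Prop :=
  ∀ a b c, m (m a b) c - m a (m b c) = m (m c b) a - m c (m b a)

/-- The coassociativity defect `(Δ ⊗ id)Δ - (id ⊗ Δ)Δ`, viewed in `(A ⊗ A) ⊗ A`. -/
noncomputable def coassocDefect (Δ : A →ₗ[K] A ⊗[K] A) : A →ₗ[K] (A ⊗[K] A) ⊗[K] A :=
  (rTensor A Δ) ∘ₗ Δ - (α K A A A) ∘ₗ (lTensor A Δ) ∘ₗ Δ

/-- Anti-flexible coalgebra: the coassociativity defect is `τ₁₃`-invariant. -/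
def IsAFCoalgebra (Δ : A →ₗ[K] A ⊗[K] A) : Prop :=
  ∀ a, coassocDefect Δ a = τ₁₃ K A A A (coassocDefect Δ a)

/-- Anti-flexible bialgebra. -/
def IsAFBialgebra (m : A →ₗ[K] A →ₗ[K] A) (Δ : A →ₗ[K] A ⊗[K] A) : Prop :=
  IsAFAlgebra m ∧ IsAFCoalgebra Δ ∧
  (∀ a b, Δ (m a b) + τ K A A (Δ (m b a)) =
      rTensor A (m b) (τ K A A (Δ a)) + lTensor A (m.flip a) (τ K A A (Δ b))
      + rTensor A (m.flip b) (Δ a) + lTensor A (m a) (Δ b)) ∧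
  (∀ a b, ω K A (lTensor A (m.flip b) (Δ a) - rTensor A (m b) (Δ a)
      - lTensor A (m.flip a) (Δ b) + rTensor A (m a) (Δ b)) = 0)

/-- `V` is a bimodule over the anti-flexible algebra `(H, m)` via `tr = ▷` and `tl = ◁`. -/
def IsAFBimodule (m : H →ₗ[K] H →ₗ[K] H)
    (tr : H →ₗ[K] V →ₗ[K] V) (tl : V →ₗ[K] H →ₗ[K] V) : Prop :=
  (∀ x y v, tr (m x y) v - tr x (tr y v) = tl (tl v y) x - tl v (m y x)) ∧
  (∀ x y v, tl (tr x v) y - tr x (tl v y) = tl (tr y v) x - tr y (tl v x))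

/-- `V` is a bicomodule over the anti-flexible coalgebra `(H, Δ)` via `φ` and `ψ`. -/
def IsAFBicomodule (Δ : H →ₗ[K] H ⊗[K] H)
    (φ : V →ₗ[K] H ⊗[K] V) (ψ : V →ₗ[K] V ⊗[K] H) : Prop :=
  (∀ v, rTensor V Δ (φ v) - α K H H V (lTensor H φ (φ v))
      = τ₁₃ K V H H (rTensor H ψ (ψ v) - α K V H H (lTensor V Δ (ψ v)))) ∧
  (∀ v, rTensor H φ (ψ v) - α K H V H (lTensor H ψ (φ v))
      = τ₁₃ K H V H (rTensor H φ (ψ v) - α K H V H (lTensor H ψ (φ v))))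

/-- Anti-flexible Hopf bimodule over `(H, m, Δ)`, with conditions (HM1)-(HM3). -/
def IsAFHopfBimodule (m : H →ₗ[K] H →ₗ[K] H) (Δ : H →ₗ[K] H ⊗[K] H)
    (tr : H →ₗ[K] V →ₗ[K] V) (tl : V →ₗ[K] H →ₗ[K] V)
    (φ : V →ₗ[K] H ⊗[K] V) (ψ : V →ₗ[K] V ⊗[K] H) : Prop :=
  IsAFBimodule m tr tl ∧ IsAFBicomodule Δ φ ψ ∧
  -- (HM1)
  (∀ x v, φ (tr x v) + τ K V H (ψ (tl v x))
      = lTensor H (tr x) (φ v) + lTensor H (tl.flip x) (τ K V H (ψ v))) ∧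
  -- (HM2)
  (∀ x v, ψ (tr x v) + τ K H V (φ (tl v x))
      = rTensor H (tr.flip v) (Δ x) + lTensor V (m x) (ψ v)
      + lTensor V (m.flip x) (τ K H V (φ v)) + rTensor H (tl v) (τ K H H (Δ x))) ∧
  -- (HM3)
  (∀ x v, rTensor H (tr x) (ψ v) - rTensor H (tl v) (Δ x) - lTensor V (m.flip x) (ψ v)
      = τ K H V (- lTensor H (tl.flip x) (φ v) + rTensor V (m x) (φ v)
        + lTensor H (tr.flip v) (Δ x)))

/-- `A` is a braided anti-flexible bialgebra over `(H, mH, ΔH)`: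
an anti-flexible algebra and coalgebra in the category of anti-flexible Hopf bimodules,
satisfying (BB1) and (BB2). -/
def IsBraidedAFBialgebra (mA : A →ₗ[K] A →ₗ[K] A) (ΔA : A →ₗ[K] A ⊗[K] A)
    (mH : H →ₗ[K] H →ₗ[K] H) (ΔH : H →ₗ[K] H ⊗[K] H)
    (tr : H →ₗ[K] A →ₗ[K] A) (tl : A →ₗ[K] H →ₗ[K] A)
    (φ : A →ₗ[K] H ⊗[K] A) (ψ : A →ₗ[K] A ⊗[K] H) : Prop :=
  IsAFAlgebra mA ∧ IsAFCoalgebra ΔA ∧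
  IsAFHopfBimodule mH ΔH tr tl φ ψ ∧
  -- H-bimodule algebra
  (∀ x a b, mA (tr x a) b - tr x (mA a b) = tl (mA b a) x - mA b (tl a x)) ∧
  (∀ x a b, mA a (tr x b) - mA (tl a x) b = mA b (tr x a) - mA (tl b x) a) ∧
  -- H-bimodule coalgebra
  (∀ x b, ΔA (tr x b) + τ K A A (ΔA (tl b x))
      = lTensor A (tl.flip x) (τ K A A (ΔA b)) + lTensor A (tr x) (ΔA b)) ∧
  (∀ x b, ω K A (rTensor A (tr x) (ΔA b) - lTensor A (tl.flip x) (ΔA b)) = 0) ∧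
  -- H-bicomodule algebra
  (∀ a b, φ (mA a b) + τ K A H (ψ (mA b a))
      = lTensor H (mA a) (φ b) + lTensor H (mA.flip a) (τ K A H (ψ b))) ∧
  (∀ a b, lTensor H (mA.flip b) (φ a) - lTensor H (mA.flip a) (φ b)
      = τ K A H (rTensor H (mA a) (ψ b) - rTensor H (mA b) (ψ a))) ∧
  -- H-bicomodule coalgebra
  (∀ a, rTensor A φ (ΔA a) - α K H A A (lTensor H ΔA (φ a))
      = τ₁₃ K A A H (rTensor H ΔA (ψ a) - α K A A H (lTensor A ψ (ΔA a)))) ∧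
  (∀ a, rTensor A ψ (ΔA a) - α K A H A (lTensor A φ (ΔA a))
      = τ₁₃ K A H A (rTensor A ψ (ΔA a) - α K A H A (lTensor A φ (ΔA a)))) ∧
  -- (BB1)
  (∀ a b, ΔA (mA a b) + τ K A A (ΔA (mA b a))
      = rTensor A (mA.flip b) (ΔA a) + rTensor A (mA b) (τ K A A (ΔA a))
      + lTensor A (mA a) (ΔA b) + lTensor A (mA.flip a) (τ K A A (ΔA b))
      + rTensor A (tr.flip b) (φ a) + rTensor A (tl b) (τ K A H (ψ a))
      + lTensor A (tl a) (ψ b) + lTensor A (tr.flip a) (τ K H A (φ b))) ∧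
  -- (BB2)
  (∀ a b, ω K A (lTensor A (mA.flip b) (ΔA a) - rTensor A (mA b) (ΔA a)
        - lTensor A (mA.flip a) (ΔA b) + rTensor A (mA a) (ΔA b))
      + ω K A (lTensor A (tr.flip b) (ψ a) - rTensor A (tl b) (φ a)
        - lTensor A (tr.flip a) (ψ b) + rTensor A (tl a) (φ b)) = 0)

/-- The (cocycle) cross product multiplication on `A × H`:
`(a,x)(b,y) = (ab + x⇀b + a↼y + σ(x,y), xy + x◁b + a▷y + θ(a,b))`,
where `tr = ⇀`, `tl = ↼`, `sr = ▷`, `sl = ◁`. -/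
noncomputable def prodMul (mA : A →ₗ[K] A →ₗ[K] A) (mH : H →ₗ[K] H →ₗ[K] H)
    (tr : H →ₗ[K] A →ₗ[K] A) (tl : A →ₗ[K] H →ₗ[K] A)
    (sr : A →ₗ[K] H →ₗ[K] H) (sl : H →ₗ[K] A →ₗ[K] H)
    (σ : H →ₗ[K] H →ₗ[K] A) (θ : A →ₗ[K] A →ₗ[K] H) :
    (A × H) →ₗ[K] (A × H) →ₗ[K] (A × H) :=
  ((mA ∘ₗ fst K A H).compl₂ (fst K A H) + (tr ∘ₗ snd K A H).compl₂ (fst K A H)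
    + (tl ∘ₗ fst K A H).compl₂ (snd K A H)
    + (σ ∘ₗ snd K A H).compl₂ (snd K A H)).compr₂ (inl K A H)
  + ((mH ∘ₗ snd K A H).compl₂ (snd K A H) + (sl ∘ₗ snd K A H).compl₂ (fst K A H)
    + (sr ∘ₗ fst K A H).compl₂ (snd K A H)
    + (θ ∘ₗ fst K A H).compl₂ (fst K A H)).compr₂ (inr K A H)

/-- The (cycle) cross coproduct comultiplication on `A × H`:
`Δ(a) = Δ_A(a) + φ(a) + ψ(a) + P(a)` and `Δ(x) = Δ_H(x) + ρ(x) + γ(x) + Q(x)`. -/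
noncomputable def prodComul (ΔA : A →ₗ[K] A ⊗[K] A) (ΔH : H →ₗ[K] H ⊗[K] H)
    (φ : A →ₗ[K] H ⊗[K] A) (ψ : A →ₗ[K] A ⊗[K] H)
    (ρ : H →ₗ[K] A ⊗[K] H) (γ : H →ₗ[K] H ⊗[K] A)
    (P : A →ₗ[K] H ⊗[K] H) (Q : H →ₗ[K] A ⊗[K] A) :
    (A × H) →ₗ[K] (A × H) ⊗[K] (A × H) :=
  (TensorProduct.map (inl K A H) (inl K A H)) ∘ₗ ΔA ∘ₗ fst K A H
  + (TensorProduct.map (inr K A H) (inl K A H)) ∘ₗ φ ∘ₗ fst K A H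
  + (TensorProduct.map (inl K A H) (inr K A H)) ∘ₗ ψ ∘ₗ fst K A H
  + (TensorProduct.map (inr K A H) (inr K A H)) ∘ₗ P ∘ₗ fst K A H
  + (TensorProduct.map (inr K A H) (inr K A H)) ∘ₗ ΔH ∘ₗ snd K A H
  + (TensorProduct.map (inl K A H) (inr K A H)) ∘ₗ ρ ∘ₗ snd K A H
  + (TensorProduct.map (inr K A H) (inl K A H)) ∘ₗ γ ∘ₗ snd K A H
  + (TensorProduct.map (inl K A H) (inl K A H)) ∘ₗ Q ∘ₗ snd K A H

/-- The linear map `(a, x) ↦ (a + r(x), s(x))` on `A × V`. -/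
noncomputable def phiRS (r : V →ₗ[K] A) (s : V →ₗ[K] V) : (A × V) →ₗ[K] (A × V) :=
  (fst K A V + r ∘ₗ snd K A V).prod (s ∘ₗ snd K A V)

end Structures

end AntiFlexible

open AntiFlexible

/-- if the anti-flexible algebra `E` contains the anti-flexible
algebra `A` as a subalgebra and `p : E → A` is a linear projection with kernel
`V`, then there is a type (a2) extending datum of `A` through `V` such that
`(a,x) ↦ ιa + x` is an isomorphism of anti-flexible algebras `A_σ # V ≅ E`. -/
theorem extending_a2_realisation
    (K A E : Type*) [Field K] [CharZero K]
    [AddCommGroup A] [Module K A] [AddCommGroup E] [Module K E]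
    (mA : A →ₗ[K] A →ₗ[K] A) (mE : E →ₗ[K] E →ₗ[K] E)
    (ι : A →ₗ[K] E) (p : E →ₗ[K] A)
    (hA : IsAFAlgebra mA) (hE : IsAFAlgebra mE)
    (hι : Function.Injective ι) (hpι : ∀ a : A, p (ι a) = a)
    (hsub : ∀ a b : A, mE (ι a) (ι b) = ι (mA a b)) :
    ∃ (tr : ↥(LinearMap.ker p) →ₗ[K] A →ₗ[K] A)
      (tl : A →ₗ[K] ↥(LinearMap.ker p) →ₗ[K] A)
      (sl : ↥(LinearMap.ker p) →ₗ[K] A →ₗ[K] ↥(LinearMap.ker p))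
      (sr : A →ₗ[K] ↥(LinearMap.ker p) →ₗ[K] ↥(LinearMap.ker p))
      (σ : ↥(LinearMap.ker p) →ₗ[K] ↥(LinearMap.ker p) →ₗ[K] A)
      (mV : ↥(LinearMap.ker p) →ₗ[K] ↥(LinearMap.ker p) →ₗ[K] ↥(LinearMap.ker p)),
      -- the data form a type (a2) extending datum:
      IsAFAlgebra (prodMul mA mV tr tl sr sl σ 0) ∧
      -- `(a,x) ↦ ι a + x` is an algebra isomorphism `A_σ # V ≅ E`
      (∀ q q' : A × ↥(LinearMap.ker p),
        ι ((prodMul mA mV tr tl sr sl σ 0) q q').1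
          + (((prodMul mA mV tr tl sr sl σ 0) q q').2 : E)
          = mE (ι q.1 + (q.2 : E)) (ι q'.1 + (q'.2 : E))) ∧
      Function.Bijective (fun q : A × ↥(LinearMap.ker p) => ι q.1 + (q.2 : E)) := by
  classical
  have hmem : ∀ e : E, e - ι (p e) ∈ LinearMap.ker p := fun e => by
    simp [LinearMap.mem_ker, hpι]
  let πV : E →ₗ[K] ↥(LinearMap.ker p) :=
    (LinearMap.id - ι ∘ₗ p).codRestrict (LinearMap.ker p) (fun e => by
      simpa using hmem e)
  have hπV : ∀ e : E, ((πV e : E)) = e - ι (p e) := fun e => rfl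
  let j := (LinearMap.ker p).subtype
  refine ⟨(((mE ∘ₗ j).compl₂ ι).compr₂ p), (((mE ∘ₗ ι).compl₂ j).compr₂ p),
    (((mE ∘ₗ j).compl₂ ι).compr₂ πV), (((mE ∘ₗ ι).compl₂ j).compr₂ πV),
    (((mE ∘ₗ j).compl₂ j).compr₂ p), (((mE ∘ₗ j).compl₂ j).compr₂ πV), ?_, ?_, ?_⟩
  case refine_2 =>
    intro q q'
    obtain ⟨a, x⟩ := q
    obtain ⟨b, y⟩ := q'
    simp only [prodMul, LinearMap.add_apply, LinearMap.compr₂_apply, LinearMap.compl₂_apply,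
      LinearMap.comp_apply, LinearMap.fst_apply, LinearMap.snd_apply, LinearMap.inl_apply,
      LinearMap.inr_apply, LinearMap.zero_apply, Prod.fst_add, Prod.snd_add,
      LinearMap.map_add, map_add, Submodule.coe_add, hπV, hsub]
    simp only [j, Submodule.coe_subtype, map_zero, ZeroMemClass.coe_zero, add_zero, zero_add]
    abel
  case refine_1 =>
    -- anti-flexibility pulled back through the injective linear map F
    set m := prodMul mA
      ((((mE ∘ₗ j).compl₂ j).compr₂ πV))
      ((((mE ∘ₗ j).compl₂ ι).compr₂ p)) ((((mE ∘ₗ ι).compl₂ j).compr₂ p))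
      ((((mE ∘ₗ ι).compl₂ j).compr₂ πV)) ((((mE ∘ₗ j).compl₂ ι).compr₂ πV))
      ((((mE ∘ₗ j).compl₂ j).compr₂ p)) 0 with hm
    have key : ∀ q q' : A × ↥(LinearMap.ker p),
        ι ((m q q').1) + (((m q q').2 : E)) = mE (ι q.1 + (q.2 : E)) (ι q'.1 + (q'.2 : E)) := by
      intro q q'
      obtain ⟨a, x⟩ := q
      obtain ⟨b, y⟩ := q'
      simp only [hm, prodMul, LinearMap.add_apply, LinearMap.compr₂_apply,
        LinearMap.compl₂_apply, LinearMap.comp_apply, LinearMap.fst_apply, LinearMap.snd_apply,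
        LinearMap.inl_apply, LinearMap.inr_apply, LinearMap.zero_apply, Prod.fst_add,
        Prod.snd_add, LinearMap.map_add, map_add, Submodule.coe_add, hπV, hsub]
      simp only [j, Submodule.coe_subtype, map_zero, ZeroMemClass.coe_zero, add_zero, zero_add]
      abel
    set F : (A × ↥(LinearMap.ker p)) →ₗ[K] E :=
      (ι ∘ₗ LinearMap.fst K A _) + (j ∘ₗ LinearMap.snd K A _) with hF
    have hFapp : ∀ q : A × ↥(LinearMap.ker p), F q = ι q.1 + (q.2 : E) := fun q => rfl
    have hFinj : Function.Injective F := by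
      intro q q' h
      have h1 : p (F q) = p (F q') := by rw [h]
      simp only [hFapp, map_add, hpι] at h1
      have h1' : q.1 = q'.1 := by
        have := (q.2).2
        have := (q'.2).2
        simpa [LinearMap.mem_ker.mp q.2.2, LinearMap.mem_ker.mp q'.2.2] using h1
      have h2 : (q.2 : E) = (q'.2 : E) := by
        have := h
        simp only [hFapp, h1'] at this
        exact add_left_cancel this
      exact Prod.ext h1' (Subtype.ext h2)
    intro q q' q''
    apply hFinj
    have hmul : ∀ r r' : A × ↥(LinearMap.ker p), F (m r r') = mE (F r) (F r') := by
      intro r r'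
      rw [hFapp, hFapp, hFapp]
      exact key r r'
    rw [map_sub, map_sub, hmul, hmul, hmul, hmul, hmul, hmul, hmul, hmul]
    exact hE (F q) (F q') (F q'')
  case refine_3 =>
    constructor
    · intro q q' h
      simp only at h
      have h1 : q.1 = q'.1 := by
        have := congrArg p h
        simpa [map_add, hpι, LinearMap.mem_ker.mp q.2.2, LinearMap.mem_ker.mp q'.2.2] using this
      have h2 : (q.2 : E) = (q'.2 : E) := by
        rw [h1] at h
        exact add_left_cancel h
      exact Prod.ext h1 (Subtype.ext h2)
    · intro e
      exact ⟨(p e, ⟨e - ι (p e), hmem e⟩), by simp⟩
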